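/- arXiv:2307.11118 — 2 statements merged into one kernel-verified Lean document; each statement's English description precedes it below -/
import Mathlib

section
/- If a numerical method x_{n+1} = x_n + δ Σ_{m=0}^s b_m f(x_{n-m}) has order p ≥ 1 (so Σ_{m=0}^s b_m = 1), then the modified method obtained by applying Heavy Ball momentum with damping β ∈ (0,1), namely x_{n+1} − x_n − (1−β)(x_n − x_{n-1}) = δβ Σ_{m=0}^s b_m f(x_{n-m}), has order of convergence exactly 1 (it satisfies the order conditions for p = 1). -/
/-- If a method `x_{n+1} = x_n + δ Σ_{m=0}^s b_m f(x_{n-m})` has order `p ≥ 1`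
(so `Σ b_m = 1`), then the Heavy Ball modification with damping `β ∈ (0,1)`,
`x_{n+1} − x_n − (1−β)(x_n − x_{n-1}) = δβ Σ b_m f(x_{n-m})`,
satisfies the linear-multistep order conditions for order 1: with coefficients
`a_0 = 1, a_1 = −(2−β), a_2 = 1−β` and effective right-hand coefficients
`b'_m = β b_{m-1}` for `1 ≤ m ≤ s+1` (indices shifted by one), one has
`Σ a_m = 0` and `Σ a_m m + Σ b'_m m⁰ = 0`. -/
theorem heavy_ball_first_order (s p : ℕ) (hp : 1 ≤ p) (b : ℕ → ℝ)
    (hb : ∑ m ∈ Finset.range (s + 1), b m = 1)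
    (β : ℝ) (hβ : β ∈ Set.Ioo (0 : ℝ) 1) :
    (∑ m ∈ Finset.range 3,
        (if m = 0 then (1 : ℝ) else if m = 1 then -(2 - β) else 1 - β) = 0) ∧
    (∑ m ∈ Finset.range 3,
        (if m = 0 then (1 : ℝ) else if m = 1 then -(2 - β) else 1 - β) * (m : ℝ)
      + ∑ m ∈ Finset.range (s + 2),
          (if m = 0 then (0 : ℝ) else β * b (m - 1)) * (m : ℝ) ^ (0 : ℕ)
      = 0) := by
  constructor
  · simp [Finset.sum_range_succ]; ring
  · have h2 : ∑ m ∈ Finset.range (s + 2),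
        (if m = 0 then (0 : ℝ) else β * b (m - 1)) * (m : ℝ) ^ (0 : ℕ) = β := by
      rw [Finset.sum_range_succ']
      simp [← Finset.mul_sum, hb]
    rw [h2]
    simp [Finset.sum_range_succ]
    ring
end

section
/- For a real z < −1, the characteristic polynomial of AB2, p(r) = r² − (1 + (3/2)z)r + (1/2)z, has a real root of modulus strictly greater than 1; hence the AB2 numerical solution of x' = λx with δλ = z diverges for generic initial data. -/
/-- For any real `z < −1`, the characteristic polynomial of AB2,
`p(r) = r² − (1+(3/2)z)r + (1/2)z`, has a real root of modulus strictly
greater than 1. -/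
theorem ab2_root_outside_unit_disk (z : ℝ) (hz : z < -1) :
    ∃ r : ℝ, r ^ 2 - (1 + (3 / 2) * z) * r + (1 / 2) * z = 0 ∧ 1 < |r| := by
  have hDpos : (0:ℝ) < (1 + (3 / 2) * z) ^ 2 - 2 * z := by
    nlinarith [sq_nonneg (3 * z + 2)]
  have hs2 : Real.sqrt ((1 + (3 / 2) * z) ^ 2 - 2 * z) ^ 2
      = (1 + (3 / 2) * z) ^ 2 - 2 * z := Real.sq_sqrt hDpos.le
  have hspos : 0 < Real.sqrt ((1 + (3 / 2) * z) ^ 2 - 2 * z) :=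
    Real.sqrt_pos.mpr hDpos
  set s : ℝ := Real.sqrt ((1 + (3 / 2) * z) ^ 2 - 2 * z)
  refine ⟨((1 + (3 / 2) * z) - s) / 2, ?_, ?_⟩
  · nlinarith [hs2]
  · have hr : ((1 + (3 / 2) * z) - s) / 2 < -1 := by
      rcases le_or_gt (3 + (3 / 2) * z) 0 with h | h
      · nlinarith
      · nlinarith [hs2, sq_nonneg (s - (3 + (3 / 2) * z))]
    rw [abs_of_neg (by linarith)]
    linarith
end
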